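/- arXiv:2303.18154 — 4 statements merged into one kernel-verified Lean document; each statement's English description precedes it below -/
import Mathlib

section
/- Let X⁺, X ∈ ℝ^{n×T}, U ∈ ℝ^{m×T}, D ∈ ℝ^{n_w×n}, P ∈ ℝ^{n_p×n}, W ∈ ℝ^{n×n}, N ∈ ℝ^{m×n}, and θ¹,…,θ^{r} ∈ ℝⁿ. Set Z = [X;U]ᵀ ⊗ D and d = vec(D·X⁺), and for each j set G_j = ([W;N]·θ^j)ᵀ ⊗ I_n ∈ ℝ^{n × n(n+m)}. Suppose that for every i ∈ {1,…,n_p} and every j ∈ {1,…,r} there exist a scalar φ_{ij} > 0, a diagonal matrix Λ_{ij} ∈ ℝ^{T·n_w × T·n_w} with nonnegative diagonal entries, and a diagonal matrix Γ_{ij} ∈ ℝ^{n_w × n_w} with nonnegative diagonal entries, such that, with r_{ij} = φ_{ij} − 𝟏ᵀΛ_{ij}𝟏 − 𝟏ᵀΓ_{ij}𝟏 + dᵀΛ_{ij}d, the symmetric block matrix [[r_{ij}, −dᵀΛ_{ij}Z, 0, 0], [−ZᵀΛ_{ij}d, ZᵀΛ_{ij}Z, 0, G_jᵀ], [0, 0,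 DᵀΓ_{ij}D, I_n], [0, G_j, I_n, W + Wᵀ − φ_{ij}·Pᵀe_i e_iᵀ P]] is positive semidefinite, where e_i is the i-th standard basis vector of ℝ^{n_p}. Then for every M ∈ ℝ^{n×(n+m)} with every entry of D·X⁺ − D·M·[X;U] in [−1,1], every w ∈ ℝⁿ with −𝟏 ≤ D·w ≤ 𝟏 entrywise, every j ∈ {1,…,r}, and every θ⁺ ∈ ℝⁿ satisfying W·θ⁺ = M·[W;N]·θ^j + w, one has −𝟏 ≤ P·θ⁺ ≤ 𝟏 entrywise. -/
open Matrix
open scoped Kronecker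

open Matrix in
private lemma diag_quad_le' {ι : Type*} [Fintype ι] [DecidableEq ι] (Λ : Matrix ι ι ℝ)
    (hoff : ∀ p q, p ≠ q → Λ p q = 0) (hdiag : ∀ p, 0 ≤ Λ p p)
    (e : ι → ℝ) (he : ∀ p, -1 ≤ e p ∧ e p ≤ 1) :
    e ⬝ᵥ Λ.mulVec e ≤ (fun _ => (1:ℝ)) ⬝ᵥ Λ.mulVec (fun _ => (1:ℝ)) := by
  simp only [Matrix.mulVec, dotProduct]
  apply Finset.sum_le_sum
  intro p _
  have h1 : (∑ q, Λ p q * e q) = Λ p p * e p :=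
    Finset.sum_eq_single p (fun q _ hq => by rw [hoff p q (Ne.symm hq), zero_mul]) (by simp)
  have h2 : (∑ q, Λ p q * 1) = Λ p p :=
    by rw [Finset.sum_eq_single p (fun q _ hq => by rw [hoff p q (Ne.symm hq), zero_mul]) (by simp), mul_one]
  rw [h1, h2, one_mul]
  obtain ⟨hl, hr⟩ := he p
  have h3 : e p * e p ≤ 1 := by nlinarith
  calc e p * (Λ p p * e p) = Λ p p * (e p * e p) := by ring
    _ ≤ Λ p p * 1 := mul_le_mul_of_nonneg_left h3 (hdiag p)
    _ = Λ p p := mul_one _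


set_option maxHeartbeats 1600000 in
/-- **Data-based LMI condition for invariance (Theorem 1).**
Suppose that for each `i, j` there exist `φ_{ij} > 0` and diagonal nonnegative
`Λ_{ij}, Γ_{ij}` such that the symmetric block matrix
`[[r_{ij}, −dᵀΛ_{ij}Z, 0, 0], [−ZᵀΛ_{ij}d, ZᵀΛ_{ij}Z, 0, G_jᵀ],
  [0, 0, DᵀΓ_{ij}D, I_n], [0, G_j, I_n, W + Wᵀ − φ_{ij}·Pᵀe_i e_iᵀP]]`
is positive semidefinite, where `r_{ij} = φ_{ij} − 𝟏ᵀΛ_{ij}𝟏 − 𝟏ᵀΓ_{ij}𝟏 + dᵀΛ_{ij}d`,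
`Z = [X;U]ᵀ ⊗ D`, `d = vec(D·X⁺)` and `G_j = ([W;N]·θʲ)ᵀ ⊗ I_n`.
Then for every data-consistent model `M`, every admissible disturbance `w`, every vertex
`θʲ` and every `θ⁺` with `W·θ⁺ = M·[W;N]·θʲ + w`, one has `−𝟏 ≤ P·θ⁺ ≤ 𝟏`. -/
theorem data_based_lmi_invariance (n m T nw np r : ℕ)
    (Xp X : Matrix (Fin n) (Fin T) ℝ) (U : Matrix (Fin m) (Fin T) ℝ)
    (D : Matrix (Fin nw) (Fin n) ℝ) (P : Matrix (Fin np) (Fin n) ℝ)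
    (W : Matrix (Fin n) (Fin n) ℝ) (N : Matrix (Fin m) (Fin n) ℝ)
    (θ : Fin r → (Fin n → ℝ))
    (Z : Matrix (Fin T × Fin nw) ((Fin n ⊕ Fin m) × Fin n) ℝ)
    (hZ : Z = (fromRows X U)ᵀ ⊗ₖ D)
    (d : Fin T × Fin nw → ℝ)
    (hd : d = fun p => (D * Xp) p.2 p.1)
    (G : Fin r → Matrix (Fin n) ((Fin n ⊕ Fin m) × Fin n) ℝ)
    (hG : ∀ j, G j = Matrix.of fun a q =>
      ((fromRows W N).mulVec (θ j)) q.1 * (1 : Matrix (Fin n) (Fin n) ℝ) a q.2)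
    (hLMI : ∀ (i : Fin np) (j : Fin r),
      ∃ (φ : ℝ) (Λ : Matrix (Fin T × Fin nw) (Fin T × Fin nw) ℝ)
        (Γ : Matrix (Fin nw) (Fin nw) ℝ),
        0 < φ ∧
        (∀ p q, p ≠ q → Λ p q = 0) ∧ (∀ p, 0 ≤ Λ p p) ∧
        (∀ p q, p ≠ q → Γ p q = 0) ∧ (∀ p, 0 ≤ Γ p p) ∧
        (Matrix.fromBlocks
          (Matrix.fromBlocks
            (Matrix.of fun (_ _ : Unit) =>
              φ - (fun _ => (1 : ℝ)) ⬝ᵥ Λ.mulVec (fun _ => (1 : ℝ))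
                - (fun _ => (1 : ℝ)) ⬝ᵥ Γ.mulVec (fun _ => (1 : ℝ))
                + d ⬝ᵥ Λ.mulVec d)
            (Matrix.of fun (_ : Unit) q => -(Matrix.vecMul (Matrix.vecMul d Λ) Z) q)
            (Matrix.of fun q (_ : Unit) => -(Zᵀ.mulVec (Λ.mulVec d)) q)
            (Zᵀ * Λ * Z))
          (Matrix.fromBlocks 0 0 0 (G j)ᵀ)
          (Matrix.fromBlocks 0 0 0 (G j))
          (Matrix.fromBlocks (Dᵀ * Γ * D) 1 1
            (W + Wᵀ - φ • Matrix.vecMulVec (Pᵀ.mulVec (Pi.single i 1))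
              (Matrix.vecMul (Pi.single i 1) P)))).PosSemidef) :
    ∀ M : Matrix (Fin n) (Fin n ⊕ Fin m) ℝ,
      (∀ a b, (D * Xp - D * M * fromRows X U) a b ∈ Set.Icc (-1 : ℝ) 1) →
      ∀ w : Fin n → ℝ, (∀ a, -1 ≤ D.mulVec w a ∧ D.mulVec w a ≤ 1) →
      ∀ j : Fin r, ∀ θp : Fin n → ℝ,
        W.mulVec θp = M.mulVec ((fromRows W N).mulVec (θ j)) + w →
        ∀ a, -1 ≤ P.mulVec θp a ∧ P.mulVec θp a ≤ 1 := by

  intro M hM w hw j θp hdyn a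
  obtain ⟨φ, Λ, Γ, hφ, hΛoff, hΛd, hΓoff, hΓd, hpsd⟩ := hLMI a j
  set z : (Fin n ⊕ Fin m) × Fin n → ℝ := fun qb => M qb.2 qb.1 with hzdef
  set x : Fin n → ℝ := -θp with hxdef
  set v : (Unit ⊕ ((Fin n ⊕ Fin m) × Fin n)) ⊕ (Fin n ⊕ Fin n) → ℝ :=
    Sum.elim (Sum.elim (fun _ => 1) z) (Sum.elim w x) with hvdef
  set u : Fin T × Fin nw → ℝ := Z.mulVec z with hudef
  set s : ℝ := P.mulVec θp a with hsdef
  have h0 := hpsd.dotProduct_mulVec_nonneg v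
  simp only [hvdef, star_trivial, Matrix.fromBlocks_mulVec, sumElim_dotProduct_sumElim,
    dotProduct_add, Matrix.zero_mulVec, dotProduct_zero, Matrix.one_mulVec,
    add_zero, zero_add, Sum.elim_comp_inl, Sum.elim_comp_inr] at h0
  -- term 1 : the scalar block
  have e1 : ((fun _ : Unit => (1:ℝ)) ⬝ᵥ
      (Matrix.of fun (_ _ : Unit) =>
        ((φ - (fun _ => (1:ℝ)) ⬝ᵥ Λ *ᵥ fun _ => (1:ℝ)) - (fun _ => (1:ℝ)) ⬝ᵥ Γ *ᵥ fun _ => (1:ℝ))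
          + d ⬝ᵥ Λ *ᵥ d) *ᵥ fun _ : Unit => (1:ℝ)) =
      ((φ - (fun _ => (1:ℝ)) ⬝ᵥ Λ *ᵥ fun _ => (1:ℝ)) - (fun _ => (1:ℝ)) ⬝ᵥ Γ *ᵥ fun _ => (1:ℝ))
          + d ⬝ᵥ Λ *ᵥ d := by
    simp [Matrix.mulVec, dotProduct]
  -- term 2
  have e2 : ((fun _ : Unit => (1:ℝ)) ⬝ᵥ (Matrix.of fun (_ : Unit) q => -(d ᵥ* Λ ᵥ* Z) q) *ᵥ z)
      = -(d ⬝ᵥ Λ *ᵥ u) := by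
    have : (Matrix.of fun (_ : Unit) q => -(d ᵥ* Λ ᵥ* Z) q) *ᵥ z
        = fun _ : Unit => -((d ᵥ* Λ ᵥ* Z) ⬝ᵥ z) := by
      funext i
      simp [Matrix.mulVec, dotProduct, neg_mul, Finset.sum_neg_distrib]
    rw [this]
    have : (d ᵥ* Λ ᵥ* Z) ⬝ᵥ z = d ⬝ᵥ Λ *ᵥ u := by
      rw [← Matrix.dotProduct_mulVec, ← Matrix.dotProduct_mulVec, hudef]
    rw [this]
    simp [dotProduct]
  -- term 3
  have e3 : (z ⬝ᵥ (Matrix.of fun q (_ : Unit) => -(Zᵀ *ᵥ Λ *ᵥ d) q) *ᵥ fun _ : Unit => (1:ℝ))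
      = -(u ⬝ᵥ Λ *ᵥ d) := by
    have h' : (Matrix.of fun q (_ : Unit) => -(Zᵀ *ᵥ Λ *ᵥ d) q) *ᵥ (fun _ : Unit => (1:ℝ))
        = -(Zᵀ *ᵥ Λ *ᵥ d) := by
      funext i
      simp only [Matrix.mulVec, dotProduct, Matrix.of_apply, Finset.univ_unique,
        Finset.sum_singleton, mul_one, Pi.neg_apply]
    rw [h', dotProduct_neg, Matrix.dotProduct_mulVec, Matrix.vecMul_transpose, hudef]
  -- term 4
  have e4 : z ⬝ᵥ (Zᵀ * Λ * Z) *ᵥ z = u ⬝ᵥ Λ *ᵥ u := by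
    rw [← Matrix.mulVec_mulVec, ← Matrix.mulVec_mulVec, Matrix.dotProduct_mulVec,
      Matrix.vecMul_transpose, hudef]
  -- G j *ᵥ z
  have e6 : G j *ᵥ z = W *ᵥ θp - w := by
    rw [hdyn, add_sub_cancel_right]
    funext b
    rw [hG]
    simp only [Matrix.mulVec, dotProduct, Matrix.of_apply, Fintype.sum_prod_type,
      Matrix.one_apply, mul_ite, mul_one, mul_zero, ite_mul, zero_mul, hzdef]
    rw [Finset.sum_comm]
    simp [Finset.sum_ite_eq, mul_comm]
  -- term 5
  have e5 : z ⬝ᵥ (G j)ᵀ *ᵥ x = (W *ᵥ θp - w) ⬝ᵥ x := by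
    rw [Matrix.dotProduct_mulVec, Matrix.vecMul_transpose, e6]
  -- term 6
  have e6' : x ⬝ᵥ G j *ᵥ z = x ⬝ᵥ (W *ᵥ θp - w) := by rw [e6]
  -- term 7
  have e7 : w ⬝ᵥ (Dᵀ * Γ * D) *ᵥ w = (D *ᵥ w) ⬝ᵥ Γ *ᵥ (D *ᵥ w) := by
    rw [← Matrix.mulVec_mulVec, ← Matrix.mulVec_mulVec, Matrix.dotProduct_mulVec,
      Matrix.vecMul_transpose]
  -- term 10
  have hvmv : ∀ (aa bb xx : Fin n → ℝ), Matrix.vecMulVec aa bb *ᵥ xx = (bb ⬝ᵥ xx) • aa := by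
    intro aa bb xx; funext i
    simp only [Matrix.vecMulVec, Matrix.mulVec, dotProduct, Matrix.of_apply,
      Pi.smul_apply, smul_eq_mul, Finset.sum_mul, Finset.mul_sum]
    apply Finset.sum_congr rfl; intros; ring
  have hPx : P *ᵥ x = -(P *ᵥ θp) := by rw [hxdef, Matrix.mulVec_neg]
  have e10 : x ⬝ᵥ (W + Wᵀ - φ • Matrix.vecMulVec (Pᵀ *ᵥ Pi.single a 1) (Pi.single a 1 ᵥ* P)) *ᵥ x
      = x ⬝ᵥ W *ᵥ x + x ⬝ᵥ Wᵀ *ᵥ x - φ * (s * s) := by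
    rw [Matrix.sub_mulVec, Matrix.add_mulVec, dotProduct_sub, dotProduct_add]
    have h1 : x ⬝ᵥ (φ • Matrix.vecMulVec (Pᵀ *ᵥ Pi.single a 1) (Pi.single a 1 ᵥ* P)) *ᵥ x
        = φ * (s * s) := by
      rw [Matrix.smul_mulVec, dotProduct_smul, hvmv]
      have hb : (Pi.single a 1 ᵥ* P) ⬝ᵥ x = -s := by
        rw [← Matrix.dotProduct_mulVec, hPx, dotProduct_neg,
          single_dotProduct, one_mul, hsdef]
      have ha : x ⬝ᵥ (Pᵀ *ᵥ Pi.single a 1) = -s := by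
        rw [Matrix.dotProduct_mulVec, Matrix.vecMul_transpose, hPx]
        simp [dotProduct_single, hsdef]
      rw [dotProduct_smul, hb, ha]
      simp only [smul_eq_mul]
      ring
    rw [h1]
  rw [e1, e2, e3, e4, e5, e6', e7, e10] at h0
  -- quadratic expansion bound for Λ
  have hu : ∀ p, d p - u p = (D * Xp - D * M * fromRows X U) p.2 p.1 := by
    intro p
    rw [hd, hudef, hZ, hzdef]
    simp only [Matrix.sub_apply, Matrix.mulVec, dotProduct, Matrix.kroneckerMap_apply,
      Matrix.transpose_apply, Fintype.sum_prod_type, Matrix.mul_apply]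
    congr 1
    apply Finset.sum_congr rfl; intro q _
    rw [Finset.sum_mul]
    apply Finset.sum_congr rfl; intro b _
    ring
  have hexp : (d - u) ⬝ᵥ Λ *ᵥ (d - u)
      = d ⬝ᵥ Λ *ᵥ d - d ⬝ᵥ Λ *ᵥ u - u ⬝ᵥ Λ *ᵥ d + u ⬝ᵥ Λ *ᵥ u := by
    simp only [Matrix.mulVec_sub, sub_dotProduct, dotProduct_sub]
    ring
  have hb1 : (d - u) ⬝ᵥ Λ *ᵥ (d - u) ≤ (fun _ => (1:ℝ)) ⬝ᵥ Λ *ᵥ (fun _ => (1:ℝ)) := by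
    apply diag_quad_le' Λ hΛoff hΛd
    intro p
    have := hM p.2 p.1
    rw [Set.mem_Icc] at this
    have hup : (d - u) p = (D * Xp - D * M * fromRows X U) p.2 p.1 := hu p
    rw [hup]
    exact this
  have hb2 : (D *ᵥ w) ⬝ᵥ Γ *ᵥ (D *ᵥ w) ≤ (fun _ => (1:ℝ)) ⬝ᵥ Γ *ᵥ (fun _ => (1:ℝ)) :=
    diag_quad_le' Γ hΓoff hΓd _ hw
  have hlin1 : (W *ᵥ θp - w) ⬝ᵥ x = x ⬝ᵥ (W *ᵥ θp - w) := dotProduct_comm _ _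
  have hx1 : x ⬝ᵥ (W *ᵥ θp - w) = -(θp ⬝ᵥ W *ᵥ θp) + θp ⬝ᵥ w := by
    rw [hxdef, neg_dotProduct, dotProduct_sub]
    ring
  have hx2 : w ⬝ᵥ x = -(θp ⬝ᵥ w) := by
    rw [hxdef, dotProduct_neg, dotProduct_comm]
  have hx3 : x ⬝ᵥ w = -(θp ⬝ᵥ w) := by
    rw [hxdef, neg_dotProduct]
  have hx4 : x ⬝ᵥ W *ᵥ x = θp ⬝ᵥ W *ᵥ θp := by
    rw [hxdef, Matrix.mulVec_neg, dotProduct_neg, neg_dotProduct, neg_neg]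
  have hx5 : x ⬝ᵥ Wᵀ *ᵥ x = θp ⬝ᵥ W *ᵥ θp := by
    rw [hxdef, Matrix.mulVec_neg, dotProduct_neg, neg_dotProduct, neg_neg,
      Matrix.dotProduct_mulVec, Matrix.vecMul_transpose, dotProduct_comm]
  rw [hlin1, hx1, hx2, hx3, hx4, hx5] at h0
  have key : 0 ≤ φ - ((fun _ => (1:ℝ)) ⬝ᵥ Λ *ᵥ (fun _ => (1:ℝ)))
      - ((fun _ => (1:ℝ)) ⬝ᵥ Γ *ᵥ (fun _ => (1:ℝ)))
      + ((d - u) ⬝ᵥ Λ *ᵥ (d - u)) + ((D *ᵥ w) ⬝ᵥ Γ *ᵥ (D *ᵥ w)) - φ * (s * s) := by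
    rw [hexp]
    linarith
  have hs2 : s * s ≤ 1 := by nlinarith [key, hb1, hb2, hφ]
  constructor <;> nlinarith [hs2, sq_nonneg (s + 1), sq_nonneg (s - 1)]
end

section
/- Let W ∈ ℝ^{n×n} be invertible, X ∈ ℝ^{n×n} symmetric positive definite, P ∈ ℝ^{n_p×n}, φ > 0 a scalar, and e_i the i-th standard basis vector of ℝ^{n_p}. If the (n+1)×(n+1) symmetric block matrix [[W + Wᵀ − X, φ·Pᵀe_i], [φ·e_iᵀP, φ]] is positive semidefinite, then X⁻¹ − φ·W⁻ᵀ·Pᵀe_i e_iᵀ P·W⁻¹ is positive semidefinite. -/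
/-!
Take the Schur complement of the positive scalar block `φ`: with `v = Pᵀ eᵢ` the LMI says
`φ v vᵀ ≤ W + Wᵀ - X` in the Loewner order. Expanding `(W - X)ᵀ X⁻¹ (W - X) ≥ 0` gives
`W + Wᵀ - X ≤ Wᵀ X⁻¹ W`, and conjugating `φ v vᵀ ≤ Wᵀ X⁻¹ W` by `W⁻¹` yields the claim.
-/

open Matrix
open scoped MatrixOrder ComplexOrder

namespace Matrix

variable {𝕜 n : Type*} [RCLike 𝕜] [Fintype n] [DecidableEq n]

theorem PosDef.add_conjTranspose_sub_le_conjTranspose_mul_inv_mul {X : Matrix n n 𝕜}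
    (hX : X.PosDef) (W : Matrix n n 𝕜) : W + Wᴴ - X ≤ Wᴴ * X⁻¹ * W := by
  have hdet : IsUnit X.det := (isUnit_iff_isUnit_det X).mp hX.isUnit
  have hsq : (W - X)ᴴ * X⁻¹ * (W - X) = Wᴴ * X⁻¹ * W - (W + Wᴴ - X) := by
    rw [conjTranspose_sub, hX.1.eq]
    simp only [sub_mul, mul_sub, nonsing_inv_mul_cancel_right X _ hdet, mul_nonsing_inv X hdet,
      Matrix.one_mul]
    abel
  rw [le_iff, ← hsq]
  exact hX.inv.posSemidef.conjTranspose_mul_mul_same _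

theorem conjTranspose_inv_mul_conjTranspose_mul_mul_inv {W : Matrix n n 𝕜} (hW : IsUnit W.det)
    (M : Matrix n n 𝕜) : (W⁻¹)ᴴ * (Wᴴ * M * W) * W⁻¹ = M := by
  rw [← Matrix.mul_assoc, mul_nonsing_inv_cancel_right W _ hW, ← Matrix.mul_assoc,
    ← conjTranspose_mul, mul_nonsing_inv W hW, conjTranspose_one, Matrix.one_mul]

theorem posSemidef_fromBlocks_replicateCol_iff {m : Type*} [Finite m] {φ : ℝ} (hφ : 0 < φ)
    (A : Matrix m m ℝ) (v : m → ℝ) :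
    (fromBlocks A (replicateCol Unit (φ • v)) (replicateRow Unit (φ • v))
      (of fun _ _ => φ)).PosSemidef ↔ φ • vecMulVec v v ≤ A := by
  have hD : (of fun _ _ => φ : Matrix Unit Unit ℝ) = φ • 1 := by
    ext; simp
  have hDpd : (φ • 1 : Matrix Unit Unit ℝ).PosDef := PosDef.one.smul hφ
  have := hDpd.isUnit.invertible
  have hrow : replicateRow Unit (φ • v) = (replicateCol Unit (φ • v))ᴴ := by
    rw [conjTranspose_replicateCol, star_trivial]
  have hinv : (φ • 1 : Matrix Unit Unit ℝ)⁻¹ = φ⁻¹ • 1 := by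
    refine inv_eq_left_inv ?_
    rw [smul_mul_smul_comm, inv_mul_cancel₀ hφ.ne', Matrix.one_mul, one_smul]
  have hschur : replicateCol Unit (φ • v) * (φ • 1 : Matrix Unit Unit ℝ)⁻¹ *
      (replicateCol Unit (φ • v))ᴴ = φ • vecMulVec v v := by
    rw [hinv, conjTranspose_replicateCol, star_trivial, Matrix.mul_smul, Matrix.mul_one,
      Matrix.smul_mul, ← vecMulVec_eq Unit, smul_vecMulVec, vecMulVec_smul, smul_smul, smul_smul,
      inv_mul_cancel₀ hφ.ne', one_mul]
  rw [hD, hrow, PosDef.fromBlocks₂₂ _ _ hDpd, hschur, le_iff]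

end Matrix

/-- **Schur-complement step of the dilated LMI.**
Let `W` be invertible, `X` symmetric positive definite, `P ∈ ℝ^{n_p×n}`, `φ > 0` and
`e_i` the `i`-th standard basis vector of `ℝ^{n_p}`. If the block matrix
`[[W + Wᵀ − X, φ·Pᵀe_i], [φ·e_iᵀP, φ]]` is positive semidefinite, then
`X⁻¹ − φ·W⁻ᵀ·Pᵀe_i e_iᵀ P·W⁻¹` is positive semidefinite. -/
theorem dilated_lmi_schur_step (n np : ℕ)
    (W X : Matrix (Fin n) (Fin n) ℝ) (hW : IsUnit W.det) (hX : X.PosDef)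
    (P : Matrix (Fin np) (Fin n) ℝ) (φ : ℝ) (hφ : 0 < φ) (i : Fin np)
    (hLMI : (Matrix.fromBlocks
        (W + Wᵀ - X)
        (Matrix.replicateCol Unit (φ • Pᵀ.mulVec (Pi.single i 1)))
        (Matrix.replicateRow Unit (φ • Matrix.vecMul (Pi.single i 1) P))
        (Matrix.of fun (_ _ : Unit) => φ)).PosSemidef) :
    (X⁻¹ - φ • ((W⁻¹)ᵀ *
        Matrix.vecMulVec (Pᵀ.mulVec (Pi.single i 1)) (Matrix.vecMul (Pi.single i 1) P) *
        W⁻¹)).PosSemidef := by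
  set v := vecMul (Pi.single i 1) P
  rw [mulVec_transpose] at hLMI ⊢
  have hK : φ • vecMulVec v v ≤ Wᴴ * X⁻¹ * W := by
    refine ((posSemidef_fromBlocks_replicateCol_iff hφ _ v).mp hLMI).trans ?_
    simpa only [conjTranspose_eq_transpose_of_trivial] using
      hX.add_conjTranspose_sub_le_conjTranspose_mul_inv_mul W
  have hconj := star_left_conjugate_le_conjugate hK W⁻¹
  rw [star_eq_conjTranspose, conjTranspose_inv_mul_conjTranspose_mul_mul_inv hW,
    Matrix.mul_smul, Matrix.smul_mul, conjTranspose_eq_transpose_of_trivial] at hconj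
  exact hconj
end

section
/- Let X⁺, X ∈ ℝ^{n×T}, U ∈ ℝ^{m×T}, D ∈ ℝ^{n_w×n}, P ∈ ℝ^{n_p×n}, W ∈ ℝ^{n×n} invertible, N ∈ ℝ^{m×n}, and θ¹,…,θ^{r} ∈ ℝⁿ. Set Z = [X;U]ᵀ ⊗ D, d = vec(D·X⁺), and for each j set G_j = ([W;N]·θ^j)ᵀ ⊗ I_n. Suppose that for every i ∈ {1,…,n_p} and j ∈ {1,…,r} there exist a scalar φ_{ij} > 0, diagonal matrices Λ_{ij} ∈ ℝ^{T·n_w × T·n_w} and Γ_{ij} ∈ ℝ^{n_w × n_w} with nonnegative diagonal entries, a symmetric positive definite matrix X_{ij} ∈ ℝ^{n×n}, and an invertible matrix V_{ij} ∈ ℝ^{n×n}, such that: (a) the symmetric block matrix [[W + Wᵀ − X_{ij}, φ_{ij}·Pᵀe_i], [φ_{ij}·e_iᵀP, φ_{ij}]] is positive semidefinite; and (b) with r_{ij} = φ_{ij} − 𝟏ᵀΛ_{ij}𝟏 − 𝟏ᵀΓ_{ij}𝟏 + dᵀΛ_{ij}d, the symmetric block matrix [[r_{ij}, −dᵀΛ_{ij}Z,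 0, 0, 0], [−ZᵀΛ_{ij}d, ZᵀΛ_{ij}Z, 0, G_jᵀ, 0], [0, 0, DᵀΓ_{ij}D, I_n, 0], [0, G_j, I_n, V_{ij} + V_{ij}ᵀ, V_{ij}ᵀ], [0, 0, 0, V_{ij}, X_{ij}]] is positive semidefinite. Then for every M ∈ ℝ^{n×(n+m)} with every entry of D·X⁺ − D·M·[X;U] in [−1,1], every w ∈ ℝⁿ with −𝟏 ≤ D·w ≤ 𝟏 entrywise, and every j ∈ {1,…,r}, the point θ⁺ = W⁻¹·(M·[W;N]·θ^j + w) satisfies −𝟏 ≤ P·θ⁺ ≤ 𝟏 entrywise. -/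
open Matrix
open scoped Kronecker

/-!
Put `y = W θ⁺ = M [W;N] θʲ + w`. Everything rests on the dilation inequality
`cᵀ(V + Vᵀ)c ≤ cᵀXc + (Vc)ᵀX⁻¹(Vc)` for `X ≻ 0`, an instance of Young's inequality
`2aᵀb ≤ aᵀXa + bᵀX⁻¹b`.

Testing LMI (a) on `(θ⁺, -(Pθ⁺)ᵢ)` and applying the dilation inequality with `V = W` gives
`φ (Pθ⁺)ᵢ² ≤ yᵀX⁻¹y`. Testing LMI (b) on `(1, vec M, w, -c, X⁻¹Vc)` with `c = X⁻¹y` is an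
S-procedure: since `Z vec M = vec (D M [X;U])` and `G_j vec M = M [W;N] θʲ`, the multipliers
`Λ, Γ` contribute at most `𝟏ᵀΛ𝟏 + 𝟏ᵀΓ𝟏` because the data residual and `D w` lie in the unit
box, and the dilation inequality eliminates `V`; what is left is `yᵀX⁻¹y ≤ φ`.
Hence `(Pθ⁺)ᵢ² ≤ 1`.
-/

namespace Matrix

theorem replicateCol_mulVec_eq_sum_smul {m n R : Type*} [Fintype n] [CommSemiring R]
    (a : m → R) (x : n → R) :
    replicateCol n a *ᵥ x = (∑ j, x j) • a := by
  ext i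
  simp [mulVec, dotProduct, Finset.mul_sum, mul_comm]

variable {ι κ σ ω : Type*} [Fintype ι] [Fintype κ] [Fintype σ] [Fintype ω]

theorem sumElim_dotProduct_fromBlocks_mulVec_sumElim {R : Type*} [NonUnitalNonAssocSemiring R]
    (A : Matrix ι κ R) (B : Matrix ι σ R) (C : Matrix ω κ R) (D : Matrix ω σ R)
    (x₁ : ι → R) (x₂ : ω → R) (y₁ : κ → R) (y₂ : σ → R) :
    Sum.elim x₁ x₂ ⬝ᵥ fromBlocks A B C D *ᵥ Sum.elim y₁ y₂ =
      x₁ ⬝ᵥ A *ᵥ y₁ + x₁ ⬝ᵥ B *ᵥ y₂ + (x₂ ⬝ᵥ C *ᵥ y₁ + x₂ ⬝ᵥ D *ᵥ y₂) := by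
  simp only [fromBlocks_mulVec, sumElim_dotProduct_sumElim, Sum.elim_comp_inl, Sum.elim_comp_inr,
    dotProduct_add]

theorem of_mul_one_mulVec_vec {m n R : Type*} [Fintype m] [Fintype n] [DecidableEq m]
    [CommSemiring R] (b : n → R) (M : Matrix m n R) :
    (of fun i q => b q.1 * (1 : Matrix m m R) i q.2) *ᵥ vec M = M *ᵥ b := by
  ext i
  simp [mulVec, dotProduct, vec, Fintype.sum_prod_type, one_apply, mul_comm]

theorem dotProduct_transpose_mul_mul_mulVec {R : Type*} [CommSemiring R] (A : Matrix κ ι R)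
    (B : Matrix κ κ R) (x : ι → R) : x ⬝ᵥ (Aᵀ * B * A) *ᵥ x = A *ᵥ x ⬝ᵥ B *ᵥ (A *ᵥ x) := by
  rw [← mulVec_mulVec, ← mulVec_mulVec, dotProduct_mulVec, vecMul_transpose]

theorem IsDiag.dotProduct_mulVec_le_of_abs_le_one {Λ : Matrix κ κ ℝ} (hΛ : Λ.IsDiag)
    (hΛ₀ : ∀ p, 0 ≤ Λ p p) {x : κ → ℝ} (hx : ∀ p, |x p| ≤ 1) :
    x ⬝ᵥ Λ *ᵥ x ≤ 1 ⬝ᵥ Λ *ᵥ 1 := by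
  classical
  rw [← hΛ.diagonal_diag]
  refine Finset.sum_le_sum fun p _ => ?_
  have hp : x p ^ 2 ≤ 1 := (sq_le_one_iff_abs_le_one _).2 (hx p)
  simp only [mulVec_diagonal, diag_apply, Pi.one_apply]
  nlinarith [hΛ₀ p]

theorem PosDef.two_mul_dotProduct_le [DecidableEq ι] {X : Matrix ι ι ℝ} (hX : X.PosDef)
    (a b : ι → ℝ) : 2 * (a ⬝ᵥ b) ≤ a ⬝ᵥ X *ᵥ a + b ⬝ᵥ X⁻¹ *ᵥ b := by
  have hXX : X * X⁻¹ = 1 := mul_nonsing_inv X (isUnit_iff_ne_zero.2 hX.det_pos.ne')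
  have hXsymm : Xᵀ = X := hX.isHermitian
  have hXa : X *ᵥ (a - X⁻¹ *ᵥ b) = X *ᵥ a - b := by
    rw [mulVec_sub, mulVec_mulVec, hXX, one_mulVec]
  have hcross : X⁻¹ *ᵥ b ⬝ᵥ X *ᵥ a = b ⬝ᵥ a := by
    rw [dotProduct_mulVec, ← mulVec_transpose, hXsymm, mulVec_mulVec, hXX, one_mulVec]
  have h := hX.posSemidef.dotProduct_mulVec_nonneg (a - X⁻¹ *ᵥ b)
  rw [star_trivial, hXa, sub_dotProduct, dotProduct_sub, dotProduct_sub, hcross,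
    dotProduct_comm (X⁻¹ *ᵥ b) b, dotProduct_comm b a] at h
  linarith

theorem PosDef.dotProduct_add_transpose_mulVec_le [DecidableEq ι] {X : Matrix ι ι ℝ}
    (hX : X.PosDef) (V : Matrix ι ι ℝ) (c : ι → ℝ) :
    c ⬝ᵥ (V + Vᵀ) *ᵥ c ≤ c ⬝ᵥ X *ᵥ c + V *ᵥ c ⬝ᵥ X⁻¹ *ᵥ (V *ᵥ c) := by
  have h : c ⬝ᵥ Vᵀ *ᵥ c = c ⬝ᵥ V *ᵥ c := by
    rw [mulVec_transpose, dotProduct_comm, dotProduct_mulVec]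
  rw [add_mulVec, dotProduct_add, h, ← two_mul]
  exact hX.two_mul_dotProduct_le c (V *ᵥ c)

theorem PosSemidef.mul_sq_dotProduct_le {A : Matrix ι ι ℝ} {g : ι → ℝ} {φ : ℝ}
    (h : (fromBlocks A (replicateCol Unit (φ • g)) (replicateRow Unit (φ • g))
      (of fun _ _ => φ)).PosSemidef) (t : ι → ℝ) :
    φ * (g ⬝ᵥ t) ^ 2 ≤ t ⬝ᵥ A *ᵥ t := by
  have key := h.dotProduct_mulVec_nonneg (Sum.elim t fun _ => -(g ⬝ᵥ t))
  rw [star_trivial, sumElim_dotProduct_fromBlocks_mulVec_sumElim, replicateCol_mulVec_eq_sum_smul,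
    replicateRow_mulVec_eq_const] at key
  simp only [Finset.univ_unique, PUnit.default_eq_unit, Finset.sum_neg_distrib,
    Finset.sum_const, Finset.card_singleton, one_smul, neg_smul, dotProduct_neg, dotProduct_smul,
    dotProduct_comm t g, smul_eq_mul, smul_dotProduct, dotProduct_pUnit, Function.const_apply,
    neg_mul, mulVec, of_apply, mul_neg, neg_neg, neg_add_cancel, add_zero, le_add_neg_iff_add_le,
    zero_add] at key
  calc φ * (g ⬝ᵥ t) ^ 2 = g ⬝ᵥ t * (φ * g ⬝ᵥ t) := by ring
    _ ≤ t ⬝ᵥ A *ᵥ t := key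

theorem PosDef.sumElim_dotProduct_fromBlocks_dilation_mulVec_le [DecidableEq ι]
    {X : Matrix ι ι ℝ} (hX : X.PosDef) (V : Matrix ι ι ℝ) (c : ι → ℝ) :
    Sum.elim (-c) (X⁻¹ *ᵥ (V *ᵥ c)) ⬝ᵥ fromBlocks (V + Vᵀ) Vᵀ V X *ᵥ
      Sum.elim (-c) (X⁻¹ *ᵥ (V *ᵥ c)) ≤ c ⬝ᵥ X *ᵥ c := by
  set k := X⁻¹ *ᵥ (V *ᵥ c)
  have hXk : X *ᵥ k = V *ᵥ c := by
    rw [mulVec_mulVec, mul_nonsing_inv X (isUnit_iff_ne_zero.2 hX.det_pos.ne'), one_mulVec]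
  have hVk : -c ⬝ᵥ Vᵀ *ᵥ k = -(V *ᵥ c ⬝ᵥ k) := by
    rw [dotProduct_mulVec, vecMul_transpose, mulVec_neg, neg_dotProduct]
  rw [sumElim_dotProduct_fromBlocks_mulVec_sumElim, hXk, hVk, mulVec_neg, mulVec_neg,
    neg_dotProduct, dotProduct_neg, neg_neg, dotProduct_neg, dotProduct_comm k]
  linarith [hX.dotProduct_add_transpose_mulVec_le V c]

theorem IsSymm.sumElim_one_dotProduct_fromBlocks_mulVec {Λ : Matrix κ κ ℝ} (hΛ : Λ.IsSymm)
    (r : ℝ) (d : κ → ℝ) (Z : Matrix κ σ ℝ) (v : σ → ℝ) :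
    Sum.elim 1 v ⬝ᵥ Matrix.fromBlocks (of fun (_ _ : Unit) => r)
      (replicateRow Unit (-(d ᵥ* Λ ᵥ* Z))) (replicateCol Unit (-(Zᵀ *ᵥ Λ *ᵥ d)))
      (Zᵀ * Λ * Z) *ᵥ Sum.elim 1 v =
      r - d ⬝ᵥ Λ *ᵥ d + (d - Z *ᵥ v) ⬝ᵥ Λ *ᵥ (d - Z *ᵥ v) := by
  have hΛZ : Z *ᵥ v ⬝ᵥ Λ *ᵥ d = d ⬝ᵥ Λ *ᵥ (Z *ᵥ v) := by
    rw [dotProduct_mulVec, ← mulVec_transpose, hΛ, dotProduct_comm]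
  have hr : (1 : Unit → ℝ) ⬝ᵥ (of fun (_ _ : Unit) => r) *ᵥ 1 = r := by simp [mulVec, dotProduct]
  have hdv : (1 : Unit → ℝ) ⬝ᵥ replicateRow Unit (-(d ᵥ* Λ ᵥ* Z)) *ᵥ v =
      -(d ⬝ᵥ Λ *ᵥ (Z *ᵥ v)) := by
    simp [replicateRow_mulVec_eq_const, dotProduct_mulVec]
  have hvd : v ⬝ᵥ replicateCol Unit (-(Zᵀ *ᵥ Λ *ᵥ d)) *ᵥ 1 = -(d ⬝ᵥ Λ *ᵥ (Z *ᵥ v)) := by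
    rw [replicateCol_mulVec_eq_sum_smul, Fintype.sum_unique, Pi.one_apply, one_smul,
      dotProduct_neg, dotProduct_mulVec, vecMul_transpose, hΛZ]
  rw [sumElim_dotProduct_fromBlocks_mulVec_sumElim, hr, hdv, hvd,
    dotProduct_transpose_mul_mul_mulVec, mulVec_sub, dotProduct_sub, sub_dotProduct,
    sub_dotProduct, hΛZ]
  ring

section DilatedLMI

variable [DecidableEq ι]

def dilatedInvarianceLMI (φ : ℝ) (Λ : Matrix κ κ ℝ) (Γ : Matrix ω ω ℝ) (Z : Matrix κ σ ℝ)
    (d : κ → ℝ) (D : Matrix ω ι ℝ) (G : Matrix ι σ ℝ) (V X : Matrix ι ι ℝ) :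
    Matrix ((Unit ⊕ σ) ⊕ ι ⊕ ι ⊕ ι) ((Unit ⊕ σ) ⊕ ι ⊕ ι ⊕ ι) ℝ :=
  fromBlocks
    (fromBlocks (of fun _ _ => φ - 1 ⬝ᵥ Λ *ᵥ 1 - 1 ⬝ᵥ Γ *ᵥ 1 + d ⬝ᵥ Λ *ᵥ d)
      (replicateRow Unit (-(d ᵥ* Λ ᵥ* Z))) (replicateCol Unit (-(Zᵀ *ᵥ Λ *ᵥ d))) (Zᵀ * Λ * Z))
    (fromBlocks 0 0 0 (fromCols Gᵀ 0))
    (fromBlocks 0 0 0 (fromRows G 0))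
    (fromBlocks (Dᵀ * Γ * D) (fromCols 1 0) (fromRows 1 0) (fromBlocks (V + Vᵀ) Vᵀ V X))

theorem dotProduct_inv_mulVec_le_of_posSemidef_dilatedInvarianceLMI {φ : ℝ}
    {Λ : Matrix κ κ ℝ} {Γ : Matrix ω ω ℝ} {Z : Matrix κ σ ℝ} {d : κ → ℝ} {D : Matrix ω ι ℝ}
    {G : Matrix ι σ ℝ} {V X : Matrix ι ι ℝ}
    (hLMI : (dilatedInvarianceLMI φ Λ Γ Z d D G V X).PosSemidef)
    (hΛ : Λ.IsDiag) (hΛ₀ : ∀ p, 0 ≤ Λ p p) (hΓ : Γ.IsDiag) (hΓ₀ : ∀ p, 0 ≤ Γ p p)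
    (hX : X.PosDef) {v : σ → ℝ} {w : ι → ℝ} (hv : ∀ p, |(d - Z *ᵥ v) p| ≤ 1)
    (hw : ∀ p, |(D *ᵥ w) p| ≤ 1) :
    (G *ᵥ v + w) ⬝ᵥ X⁻¹ *ᵥ (G *ᵥ v + w) ≤ φ := by
  set y := G *ᵥ v + w
  set c := X⁻¹ *ᵥ y
  set k := X⁻¹ *ᵥ (V *ᵥ c)
  have hXc : X *ᵥ c = y := by
    rw [mulVec_mulVec, mul_nonsing_inv X (isUnit_iff_ne_zero.2 hX.det_pos.ne'), one_mulVec]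
  have hvc : Sum.elim (1 : Unit → ℝ) v ⬝ᵥ fromBlocks 0 0 0 (fromCols Gᵀ 0) *ᵥ
      Sum.elim w (Sum.elim (-c) k) = -(G *ᵥ v ⬝ᵥ c) := by
    rw [sumElim_dotProduct_fromBlocks_mulVec_sumElim]
    simp only [zero_mulVec, dotProduct_zero, add_zero, fromCols_mulVec, Sum.elim_comp_inl,
      Sum.elim_comp_inr, dotProduct_mulVec, vecMul_transpose, dotProduct_neg, zero_add]
  have hcv : Sum.elim w (Sum.elim (-c) k) ⬝ᵥ fromBlocks 0 0 0 (fromRows G 0) *ᵥ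
      Sum.elim (1 : Unit → ℝ) v = -(G *ᵥ v ⬝ᵥ c) := by
    simp only [sumElim_dotProduct_fromBlocks_mulVec_sumElim, zero_mulVec, dotProduct_zero,
      add_zero, fromRows_mulVec, sumElim_dotProduct_sumElim, neg_dotProduct, dotProduct_comm c,
      zero_add]
  have hwc : Sum.elim w (Sum.elim (-c) k) ⬝ᵥ
      fromBlocks (Dᵀ * Γ * D) (fromCols 1 0) (fromRows 1 0) (fromBlocks (V + Vᵀ) Vᵀ V X) *ᵥ
        Sum.elim w (Sum.elim (-c) k) =
      D *ᵥ w ⬝ᵥ Γ *ᵥ (D *ᵥ w) - 2 * (w ⬝ᵥ c) +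
        Sum.elim (-c) k ⬝ᵥ fromBlocks (V + Vᵀ) Vᵀ V X *ᵥ Sum.elim (-c) k := by
    rw [sumElim_dotProduct_fromBlocks_mulVec_sumElim]
    simp only [dotProduct_transpose_mul_mul_mulVec, fromCols_mulVec, Sum.elim_comp_inl,
      one_mulVec, Sum.elim_comp_inr, zero_mulVec, add_zero, dotProduct_neg, fromRows_mulVec,
      sumElim_dotProduct_sumElim, neg_dotProduct, dotProduct_comm c, dotProduct_zero]
    ring
  have key := hLMI.dotProduct_mulVec_nonneg
    (Sum.elim (Sum.elim 1 v) (Sum.elim w (Sum.elim (-c) k)))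
  rw [star_trivial, dilatedInvarianceLMI, sumElim_dotProduct_fromBlocks_mulVec_sumElim,
    hΛ.isSymm.sumElim_one_dotProduct_fromBlocks_mulVec, hvc, hcv, hwc] at key
  have hyc : G *ᵥ v ⬝ᵥ c + w ⬝ᵥ c = y ⬝ᵥ c := (add_dotProduct _ _ _).symm
  have hcy : c ⬝ᵥ X *ᵥ c = y ⬝ᵥ c := by rw [hXc, dotProduct_comm]
  linarith [hΛ.dotProduct_mulVec_le_of_abs_le_one hΛ₀ hv,
    hΓ.dotProduct_mulVec_le_of_abs_le_one hΓ₀ hw,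
    hX.sumElim_dotProduct_fromBlocks_dilation_mulVec_le V c]

end DilatedLMI

end Matrix

/-- **Dilated data-based LMI conditions for invariance (Theorem 2).**
Suppose that for all `i, j` there exist `φ_{ij} > 0`, diagonal nonnegative
`Λ_{ij}, Γ_{ij}`, a symmetric positive definite `X_{ij}` and an invertible `V_{ij}` such
that (a) `[[W + Wᵀ − X_{ij}, φ_{ij}·Pᵀe_i], [φ_{ij}·e_iᵀP, φ_{ij}]] ⪰ 0`, and
(b) the symmetric block matrix
`[[r_{ij}, −dᵀΛ_{ij}Z, 0, 0, 0], [−ZᵀΛ_{ij}d, ZᵀΛ_{ij}Z, 0, G_jᵀ, 0],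
  [0, 0, DᵀΓ_{ij}D, I_n, 0], [0, G_j, I_n, V_{ij} + V_{ij}ᵀ, V_{ij}ᵀ],
  [0, 0, 0, V_{ij}, X_{ij}]]` is positive semidefinite. Then for any data-consistent
model `M`, admissible disturbance `w` and vertex `θʲ`, the point
`θ⁺ = W⁻¹(M·[W;N]·θʲ + w)` satisfies `−𝟏 ≤ P·θ⁺ ≤ 𝟏`. -/
theorem dilated_data_based_lmi_invariance (n m T nw np r : ℕ)
    (Xp X : Matrix (Fin n) (Fin T) ℝ) (U : Matrix (Fin m) (Fin T) ℝ)
    (D : Matrix (Fin nw) (Fin n) ℝ) (P : Matrix (Fin np) (Fin n) ℝ)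
    (W : Matrix (Fin n) (Fin n) ℝ) (hW : IsUnit W.det)
    (N : Matrix (Fin m) (Fin n) ℝ)
    (θ : Fin r → (Fin n → ℝ))
    (Z : Matrix (Fin T × Fin nw) ((Fin n ⊕ Fin m) × Fin n) ℝ)
    (hZ : Z = (fromRows X U)ᵀ ⊗ₖ D)
    (d : Fin T × Fin nw → ℝ)
    (hd : d = fun p => (D * Xp) p.2 p.1)
    (G : Fin r → Matrix (Fin n) ((Fin n ⊕ Fin m) × Fin n) ℝ)
    (hG : ∀ j, G j = Matrix.of fun a q =>
      ((fromRows W N).mulVec (θ j)) q.1 * (1 : Matrix (Fin n) (Fin n) ℝ) a q.2)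
    (hLMI : ∀ (i : Fin np) (j : Fin r),
      ∃ (φ : ℝ) (Λ : Matrix (Fin T × Fin nw) (Fin T × Fin nw) ℝ)
        (Γ : Matrix (Fin nw) (Fin nw) ℝ)
        (Xij V : Matrix (Fin n) (Fin n) ℝ),
        0 < φ ∧
        (∀ p q, p ≠ q → Λ p q = 0) ∧ (∀ p, 0 ≤ Λ p p) ∧
        (∀ p q, p ≠ q → Γ p q = 0) ∧ (∀ p, 0 ≤ Γ p p) ∧
        Xij.PosDef ∧ IsUnit V.det ∧
        (Matrix.fromBlocks
          (W + Wᵀ - Xij)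
          (Matrix.replicateCol Unit (φ • Pᵀ.mulVec (Pi.single i 1)))
          (Matrix.replicateRow Unit (φ • Matrix.vecMul (Pi.single i 1) P))
          (Matrix.of fun (_ _ : Unit) => φ)).PosSemidef ∧
        (Matrix.fromBlocks
          (Matrix.fromBlocks
            (Matrix.of fun (_ _ : Unit) =>
              φ - (fun _ => (1 : ℝ)) ⬝ᵥ Λ.mulVec (fun _ => (1 : ℝ))
                - (fun _ => (1 : ℝ)) ⬝ᵥ Γ.mulVec (fun _ => (1 : ℝ))
                + d ⬝ᵥ Λ.mulVec d)
            (Matrix.of fun (_ : Unit) q => -(Matrix.vecMul (Matrix.vecMul d Λ) Z) q)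
            (Matrix.of fun q (_ : Unit) => -(Zᵀ.mulVec (Λ.mulVec d)) q)
            (Zᵀ * Λ * Z))
          (Matrix.fromBlocks 0 0 0 (fromCols (G j)ᵀ 0))
          (Matrix.fromBlocks 0 0 0 (fromRows (G j) 0))
          (Matrix.fromBlocks (Dᵀ * Γ * D) (fromCols 1 0) (fromRows 1 0)
            (Matrix.fromBlocks (V + Vᵀ) Vᵀ V Xij))).PosSemidef) :
    ∀ M : Matrix (Fin n) (Fin n ⊕ Fin m) ℝ,
      (∀ a b, (D * Xp - D * M * fromRows X U) a b ∈ Set.Icc (-1 : ℝ) 1) →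
      ∀ w : Fin n → ℝ, (∀ a, -1 ≤ D.mulVec w a ∧ D.mulVec w a ≤ 1) →
      ∀ j : Fin r,
        ∀ a, -1 ≤ P.mulVec (W⁻¹.mulVec (M.mulVec ((fromRows W N).mulVec (θ j)) + w)) a ∧
          P.mulVec (W⁻¹.mulVec (M.mulVec ((fromRows W N).mulVec (θ j)) + w)) a ≤ 1 := by
  intro M hM w hw j i
  obtain ⟨φ, Λ, Γ, Xij, V, hφ, hΛ, hΛ₀, hΓ, hΓ₀, hX, -, hPW, hLMI⟩ := hLMI i j
  set θ' := W⁻¹ *ᵥ (M *ᵥ (fromRows W N *ᵥ θ j) + w)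
  have hWθ' : W *ᵥ θ' = M *ᵥ (fromRows W N *ᵥ θ j) + w := by
    rw [mulVec_mulVec, mul_nonsing_inv W hW, one_mulVec]
  have hGM : G j *ᵥ vec M = M *ᵥ (fromRows W N *ᵥ θ j) := hG j ▸ of_mul_one_mulVec_vec _ M
  have hZM : d - Z *ᵥ vec M = vec (D * Xp - D * M * fromRows X U) := by
    rw [hZ, hd, kronecker_mulVec_vec, transpose_transpose, vec_sub]
    rfl
  have hLMI' : (dilatedInvarianceLMI φ Λ Γ Z d D (G j) V Xij).PosSemidef := hLMI
  have hPθ_le : φ * (P *ᵥ θ') i ^ 2 ≤ W *ᵥ θ' ⬝ᵥ Xij⁻¹ *ᵥ (W *ᵥ θ') := by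
    rw [mulVec_transpose] at hPW
    have h := hPW.mul_sq_dotProduct_le θ'
    rw [← dotProduct_mulVec, single_dotProduct, one_mul, sub_mulVec, dotProduct_sub] at h
    linarith [hX.dotProduct_add_transpose_mulVec_le W θ']
  have hquad_le : W *ᵥ θ' ⬝ᵥ Xij⁻¹ *ᵥ (W *ᵥ θ') ≤ φ := by
    rw [hWθ', ← hGM]
    refine dotProduct_inv_mulVec_le_of_posSemidef_dilatedInvarianceLMI hLMI' hΛ hΛ₀ hΓ hΓ₀ hX
      (fun p => ?_) (fun p => abs_le.2 (hw p))
    rw [hZM]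
    exact abs_le.2 (hM p.2 p.1)
  have hsq : (P *ᵥ θ') i ^ 2 ≤ 1 := by nlinarith
  exact abs_le.1 ((sq_le_one_iff_abs_le_one _).1 hsq)
end

section
/- Let W, W_q ∈ ℝ^{n×n} be arbitrary and let W_obj ∈ ℝ^{n×n} be symmetric positive semidefinite. If Wᵀ·W_q + W_qᵀ·W − W_qᵀ·W_q ⪰ W_obj (i.e. the difference is positive semidefinite), then WᵀW ⪰ W_obj, and consequently det(W_obj) ≤ (det W)². -/
/-!
The linearization `Wᵀ W_q + W_qᵀ W − W_qᵀ W_q` falls short of `Wᵀ W` by `(W − W_q)ᵀ (W − W_q) ⪰ 0`,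
so `W_obj ⪯ Wᵀ W`. The determinant is monotone on positive semidefinite matrices in the Loewner
order: if `0 ⪯ A ⪯ B` with `B` invertible, then `M = B^{-1/2} A B^{-1/2}` satisfies `0 ⪯ M ⪯ 1`,
so its eigenvalues lie in `[0, 1]` and `det A = det B · det M ≤ det B`; if `B` is singular, then so
is `A`, since `A` positive definite would force `B = A + (B − A)` to be positive definite.
-/

open Matrix

open scoped MatrixOrder ComplexOrder

namespace Matrix

variable {𝕜 n : Type*} [RCLike 𝕜] [Fintype n]

theorem conjTranspose_mul_add_sub_le_conjTranspose_mul_self {m : Type*} [Fintype m]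
    (W V : Matrix m n 𝕜) : Wᴴ * V + Vᴴ * W - Vᴴ * V ≤ Wᴴ * W := by
  rw [le_iff]
  convert posSemidef_conjTranspose_mul_self (W - V) using 1
  simp only [conjTranspose_sub, Matrix.sub_mul, Matrix.mul_sub]
  abel

variable [DecidableEq n]

theorem det_le_one_of_nonneg_of_le_one {M : Matrix n n 𝕜} (h₀ : 0 ≤ M) (h₁ : M ≤ 1) :
    M.det ≤ 1 := by
  have hM := h₀.posSemidef
  rw [hM.isHermitian.det_eq_prod_eigenvalues, ← RCLike.ofReal_prod, ← RCLike.ofReal_one,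
    RCLike.ofReal_le_ofReal]
  refine Finset.prod_le_one (fun i _ ↦ hM.eigenvalues_nonneg i) fun i _ ↦ ?_
  exact (CFC.le_one_iff M hM.isHermitian).mp h₁ _ (hM.isHermitian.eigenvalues_mem_spectrum_real i)

theorem det_conjSqrt {C : Matrix n n 𝕜} (hC : 0 ≤ C) (M : Matrix n n 𝕜) :
    (CFC.conjSqrt C M).det = C.det * M.det := by
  rw [CFC.conjSqrt_apply, det_mul, det_mul, mul_right_comm, ← det_mul, CFC.sqrt_mul_sqrt_self C]

theorem det_le_det_of_le {A B : Matrix n n 𝕜} (hA : 0 ≤ A) (hAB : A ≤ B) : A.det ≤ B.det := by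
  by_cases hB : B.PosDef
  · have hB' : IsStrictlyPositive B := isStrictlyPositive_iff_posDef.mpr hB
    set M := CFC.conjSqrt (Ring.inverse B) A
    have hM₀ : 0 ≤ M := by simpa using CFC.conjSqrt_monotone (c := Ring.inverse B) hA
    have hM₁ : M ≤ 1 := CFC.conjSqrt_ringInverse_self B ▸ CFC.conjSqrt_le_conjSqrt hAB
    calc A.det = B.det * M.det := by
          rw [← det_conjSqrt hB'.nonneg, CFC.conjSqrt_conjSqrt_ringInverse B A hB']
      _ ≤ B.det * 1 := by
          gcongr
          · exact hB.det_pos.le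
          · exact det_le_one_of_nonneg_of_le_one hM₀ hM₁
      _ = B.det := mul_one _
  · have hA' : ¬A.PosDef := fun hA' ↦ hB (by simpa using hA'.add_posSemidef hAB)
    rw [hA.posSemidef.posDef_iff_det_ne_zero, not_not] at hA'
    exact hA' ▸ (hA.trans hAB).posSemidef.det_nonneg

end Matrix

/-- **Iterative volume-increase condition.**
If `Wᵀ·W_q + W_qᵀ·W − W_qᵀ·W_q ⪰ W_obj` with `W_obj` symmetric positive semidefinite,
then `WᵀW ⪰ W_obj` and consequently `det W_obj ≤ (det W)²`. -/
theorem volume_increase_of_linearized_bound (n : ℕ)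
    (W Wq Wobj : Matrix (Fin n) (Fin n) ℝ)
    (hobj : Wobj.PosSemidef)
    (h : (Wᵀ * Wq + Wqᵀ * W - Wqᵀ * Wq - Wobj).PosSemidef) :
    (Wᵀ * W - Wobj).PosSemidef ∧ Wobj.det ≤ W.det ^ 2 := by
  have hle : Wobj ≤ Wᵀ * W :=
    (le_iff.mpr h).trans (by simpa using conjTranspose_mul_add_sub_le_conjTranspose_mul_self W Wq)
  refine ⟨le_iff.mp hle, ?_⟩
  simpa [sq] using det_le_det_of_le hobj.nonneg hle
end
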